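/- Conversely, for any acyclic set of arcs forming vertex-disjoint directed paths on {1,…,n}, there exist values u_i ∈ {0,1,…,n−1} satisfying the MTZ constraints u_j − u_i + n·x_{ij} ≤ n − 1 for all i ≠ j. -/

import Mathlib

/-!
Rank each vertex by the number of vertices reachable from it along arcs, minus one. Since the arcs
contain no cycle, the tail of an arc reaches strictly more vertices than its head, so ranks drop by
at least one along every arc; as they lie in `{0, …, n - 1}`, this is exactly what the MTZ
constraints ask for.
-/

open Finset Relation

section Reachability

variable {α : Type*} {r : α → α → Prop}

theorem Relation.TransGen.exists_fin_chain {a b : α} (h : TransGen r a b) :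
    ∃ (k : ℕ) (c : Fin (k + 1) → α), 0 < k ∧ c 0 = a ∧ c (Fin.last k) = b ∧
      ∀ t : Fin k, r (c t.castSucc) (c t.succ) := by
  induction h using TransGen.head_induction_on with
  | single hab => exact ⟨1, ![_, b], one_pos, rfl, rfl, fun t => by simpa [Fin.fin_one_eq_zero t]⟩
  | head hac _ ih =>
    obtain ⟨k, c, -, hc0, hcl, hstep⟩ := ih
    refine ⟨k + 1, Fin.cons _ c, k.succ_pos, rfl, by simpa [← Fin.succ_last] using hcl, ?_⟩
    intro t
    cases t using Fin.cases with
    | zero => simpa [hc0] using hac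
    | succ s => simpa [← Fin.succ_castSucc] using hstep s

theorem not_reflTransGen_of_not_exists_closed_chain
    (hacyclic : ¬ ∃ (k : ℕ) (c : Fin (k + 1) → α), 0 < k ∧ c 0 = c (Fin.last k) ∧
      ∀ t : Fin k, r (c t.castSucc) (c t.succ))
    {a b : α} (hab : r a b) : ¬ ReflTransGen r b a := fun hba =>
  have ⟨k, c, hk, hc0, hcl, hstep⟩ := (TransGen.head' hab hba).exists_fin_chain
  hacyclic ⟨k, c, hk, hc0.trans hcl.symm, hstep⟩

variable [Fintype α] [DecidableRel (ReflTransGen r)]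

theorem card_filter_reflTransGen_lt {a b : α} (hab : r a b) (hba : ¬ ReflTransGen r b a) :
    #{c | ReflTransGen r b c} < #{c | ReflTransGen r a c} := by
  refine card_lt_card ⟨fun c hc => ?_, fun hsub => hba ?_⟩
  · simp only [mem_filter, mem_univ, true_and] at hc ⊢
    exact ReflTransGen.head hab hc
  · simpa using hsub (mem_filter.mpr ⟨mem_univ a, .refl⟩)

end Reachability

theorem mtz_constraint_of_rank_lt {α : Type*} (n : ℕ) (x : α → α → Bool) (u : α → ℕ)
    (hu : ∀ i, u i < n) (hdec : ∀ i j, i ≠ j → x i j = true → u j < u i)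
    (i j : α) (hij : i ≠ j) :
    (u j : ℝ) - (u i : ℝ) + (n : ℝ) * (if x i j then 1 else 0) ≤ (n : ℝ) - 1 := by
  split_ifs with hx
  · have hji : (u j : ℝ) + 1 ≤ u i := by exact_mod_cast hdec i j hij hx
    have hi : (u i : ℝ) + 1 ≤ n := by exact_mod_cast hu i
    linarith
  · have hjn : (u j : ℝ) + 1 ≤ n := by exact_mod_cast hu j
    have hi : (0 : ℝ) ≤ u i := Nat.cast_nonneg _
    linarith

theorem mtz_feasible_of_paths_general (n : ℕ) (x : Fin n → Fin n → Bool)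
    (hacyclic : ¬ ∃ (k : ℕ) (c : Fin (k + 1) → Fin n), 0 < k ∧ c 0 = c (Fin.last k) ∧
        ∀ t : Fin k, c t.castSucc ≠ c t.succ ∧ x (c t.castSucc) (c t.succ) = true) :
    ∃ u : Fin n → ℕ, (∀ i, u i ≤ n - 1) ∧
      ∀ i j, i ≠ j →
        (u j : ℝ) - (u i : ℝ) + (n : ℝ) * (if x i j then 1 else 0) ≤ (n : ℝ) - 1 := by
  classical
  let arc : Fin n → Fin n → Prop := fun a b => a ≠ b ∧ x a b = true
  let reach : Fin n → Finset (Fin n) := fun i => {j | ReflTransGen arc i j}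
  have hpos (i : Fin n) : 0 < #(reach i) := card_pos.mpr ⟨i, mem_filter.mpr ⟨mem_univ i, .refl⟩⟩
  have hle (i : Fin n) : #(reach i) ≤ n := (card_le_univ _).trans_eq (Fintype.card_fin n)
  have hdec (i j : Fin n) (hij : i ≠ j) (hx : x i j = true) : #(reach j) < #(reach i) :=
    card_filter_reflTransGen_lt (r := arc) ⟨hij, hx⟩
      (not_reflTransGen_of_not_exists_closed_chain (r := arc) hacyclic ⟨hij, hx⟩)
  refine ⟨fun i => #(reach i) - 1, fun i => Nat.sub_le_sub_right (hle i) 1,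
    mtz_constraint_of_rank_lt n x _ (fun i => ?_) (fun i j hij hx => ?_)⟩
  · have := hpos i; have := hle i; omega
  · have := hpos j; have := hdec i j hij hx; omega

/-- Converse of MTZ: for any acyclic arc set forming vertex-disjoint directed paths
(in-degree and out-degree at most 1, no cycles) on `{1,…,n}`, there exist potentials
`u_i ∈ {0,…,n−1}` satisfying the MTZ constraints. -/
theorem mtz_feasible_of_paths (n : ℕ) (x : Fin n → Fin n → Bool)
    (hin : ∀ j : Fin n, (Finset.univ.filter (fun i => x i j = true)).card ≤ 1)
    (hout : ∀ i : Fin n, (Finset.univ.filter (fun j => x i j = true)).card ≤ 1)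
    (hacyclic : ¬ ∃ (k : ℕ) (c : Fin (k + 1) → Fin n), 0 < k ∧ c 0 = c (Fin.last k) ∧
        ∀ t : Fin k, c t.castSucc ≠ c t.succ ∧ x (c t.castSucc) (c t.succ) = true) :
    ∃ u : Fin n → ℕ, (∀ i, u i ≤ n - 1) ∧
      ∀ i j, i ≠ j →
        (u j : ℝ) - (u i : ℝ) + (n : ℝ) * (if x i j then 1 else 0) ≤ (n : ℝ) - 1 :=
  mtz_feasible_of_paths_general n x hacyclic
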